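/- Let f : R → R' be a homomorphism of commutative semirings, and let S be a multiplicative subset of R such that 0 ∉ f(S). If A is an f(S)-primary k-ideal of R' (disjoint from f(S)), then there exists s ∈ S such that the quotient ideal (A : f(s)) is a primary ideal of R'; moreover, for every s ∈ S, f((f⁻¹(A) : s)) ⊆ (A : f(s)). -/

import Mathlib

/-!
Write `σ = f s₀` for the witness of `f(S)`-primality. No power of `σ` lies in `A`, so
`σ ∉ √A`, and `σ^m y ∈ A` already forces `σ y ∈ A` (apply the primality condition to
`y · σ^m`). Then `(A : σ)` is primary: if `σ a b ∈ A`, either `σ a ∈ A`, or `(σ² b)^k ∈ A`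
for some `k`, and the first observation turns `σ^(2k) b^k ∈ A` into `σ b^k ∈ A`.
-/
/-- For an ideal `A` of a commutative semiring and an element `t`,
the quotient (colon) ideal `(A : t) = {x | t * x ∈ A}`. -/
def colonIdeal {R : Type*} [CommSemiring R] (A : Ideal R) (t : R) : Ideal R where
  carrier := {x : R | t * x ∈ A}
  add_mem' := fun {a b} ha hb => by simpa [mul_add] using A.add_mem ha hb
  zero_mem' := by simp
  smul_mem' := fun c x hx => by
    simpa [smul_eq_mul, mul_left_comm] using A.mul_mem_left c hx

@[simp]
theorem mem_colonIdeal {R : Type*} [CommSemiring R] {A : Ideal R} {t x : R} :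
    x ∈ colonIdeal A t ↔ t * x ∈ A :=
  Iff.rfl

theorem colonIdeal_ne_top {R : Type*} [CommSemiring R] {A : Ideal R} {t : R} (ht : t ∉ A) :
    colonIdeal A t ≠ ⊤ := by
  rwa [Ne, Ideal.eq_top_iff_one, mem_colonIdeal, mul_one]

theorem map_mem_colonIdeal_comap {R R' : Type*} [CommSemiring R] [CommSemiring R']
    (f : R →+* R') {A : Ideal R'} {s x : R} (hx : x ∈ colonIdeal (A.comap f) s) :
    f x ∈ colonIdeal A (f s) := by
  rwa [mem_colonIdeal, ← map_mul, ← Ideal.mem_comap]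

theorem pow_succ_mem_of_mul_closed {M : Type*} [Monoid M] {S : Set M}
    (hSmul : ∀ s ∈ S, ∀ t ∈ S, s * t ∈ S) {s : M} (hs : s ∈ S) (n : ℕ) :
    s ^ (n + 1) ∈ S := by
  induction n with
  | zero => rwa [pow_one]
  | succ n ih => rw [pow_succ]; exact hSmul _ ih _ hs

section PrimaryWitness

variable {R : Type*} [CommSemiring R] {A : Ideal R} {σ : R}

theorem mul_mem_of_pow_mul_mem
    (hσ : ∀ a b : R, a * b ∈ A → σ * a ∈ A ∨ σ * b ∈ A.radical) (hσA : σ ∉ A.radical)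
    {m : ℕ} {y : R} (h : σ ^ m * y ∈ A) : σ * y ∈ A :=
  (hσ y (σ ^ m) (by rwa [mul_comm])).resolve_right fun hrad =>
    hσA (Ideal.mem_radical_of_pow_mem (m := m + 1) (by rwa [pow_succ']))

theorem isPrimary_colonIdeal
    (hσ : ∀ a b : R, a * b ∈ A → σ * a ∈ A ∨ σ * b ∈ A.radical) (hσA : σ ∉ A.radical) :
    (colonIdeal A σ).IsPrimary := by
  refine Ideal.isPrimary_iff.2 ⟨colonIdeal_ne_top fun h => hσA (Ideal.le_radical h), ?_⟩
  intro a b hab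
  have hab' : a * (σ * b) ∈ A := by
    rwa [mem_colonIdeal, ← mul_assoc, mul_comm σ a, mul_assoc] at hab
  rcases hσ a (σ * b) hab' with ha | ⟨k, hk⟩
  · exact Or.inl ha
  · refine Or.inr ⟨k, mul_mem_of_pow_mul_mem hσ hσA (m := 2 * k) ?_⟩
    have hpow : (σ * (σ * b)) ^ k = σ ^ (2 * k) * b ^ k := by ring
    rwa [hpow] at hk

end PrimaryWitness

theorem colon_primary_of_fS_primary_general {R R' : Type*} [CommSemiring R] [CommSemiring R']
    (f : R →+* R')
    (S : Set R) (hSmul : ∀ s ∈ S, ∀ t ∈ S, s * t ∈ S)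
    (A : Ideal R') (hAfS : Disjoint (f '' S) (A : Set R'))
    (hAprim : ∃ σ ∈ f '' S, ∀ a b : R', a * b ∈ A → σ * a ∈ A ∨ σ * b ∈ A.radical) :
    (∃ s ∈ S, colonIdeal A (f s) ≠ ⊤ ∧
      ∀ a b : R', a * b ∈ colonIdeal A (f s) →
        a ∈ colonIdeal A (f s) ∨ b ∈ (colonIdeal A (f s)).radical) ∧
    (∀ s ∈ S, ∀ x ∈ colonIdeal (A.comap f) s, f x ∈ colonIdeal A (f s)) := by
  obtain ⟨_, ⟨s₀, hs₀, rfl⟩, hσ⟩ := hAprim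
  have hσA : f s₀ ∉ A.radical := by
    rintro ⟨k, hk⟩
    refine Set.disjoint_left.mp hAfS ⟨s₀ ^ (k + 1), pow_succ_mem_of_mul_closed hSmul hs₀ k, ?_⟩
      (A.mul_mem_right (f s₀) hk)
    rw [map_pow, pow_succ]
  obtain ⟨hne, hprim⟩ := Ideal.isPrimary_iff.1 (isPrimary_colonIdeal hσ hσA)
  exact ⟨⟨s₀, hs₀, hne, fun _ _ => hprim⟩, fun s _ _ => map_mem_colonIdeal_comap f⟩

/-- If `f : R → R'` is a semiring homomorphism with `0 ∉ f(S)` and `A` is an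
`f(S)`-primary k-ideal of `R'`, then `(A : f(s))` is a primary ideal of `R'`
for some `s ∈ S`, and `f((f⁻¹(A) : s)) ⊆ (A : f(s))` for every `s ∈ S`. -/
theorem colon_primary_of_fS_primary {R R' : Type*} [CommSemiring R] [CommSemiring R']
    (f : R →+* R')
    (S : Set R) (hS1 : (1 : R) ∈ S) (hSmul : ∀ s ∈ S, ∀ t ∈ S, s * t ∈ S)
    (h0 : (0 : R') ∉ f '' S)
    (A : Ideal R') (hAfS : Disjoint (f '' S) (A : Set R'))
    (hAk : ∀ a b : R', a + b ∈ A → a ∈ A → b ∈ A)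
    (hAprim : ∃ σ ∈ f '' S, ∀ a b : R', a * b ∈ A → σ * a ∈ A ∨ σ * b ∈ A.radical) :
    (∃ s ∈ S, colonIdeal A (f s) ≠ ⊤ ∧
      ∀ a b : R', a * b ∈ colonIdeal A (f s) →
        a ∈ colonIdeal A (f s) ∨ b ∈ (colonIdeal A (f s)).radical) ∧
    (∀ s ∈ S, ∀ x ∈ colonIdeal (A.comap f) s, f x ∈ colonIdeal A (f s)) :=
  colon_primary_of_fS_primary_general f S hSmul A hAfS hAprim
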